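/- The two-sided ideal of K⟨𝒜⟩ generated by the set BG equals the ideal ℐ. -/

import Mathlib

open scoped BigOperators

/-! ### Generic definitions over an arbitrary alphabet -/

section Generic

variable {α : Type*} {K : Type*} [Field K]

/-- The monomial (word) `w`, viewed as an element of the free associative algebra
`K⟨α⟩ = MonoidAlgebra K (FreeMonoid α)`. -/
noncomputable def Mw (w : List α) : MonoidAlgebra K (FreeMonoid α) :=
  MonoidAlgebra.single (FreeMonoid.ofList w) 1

/-- Strict deglex order on words, induced by a strict order `r` on the letters. -/
def WLt (r : α → α → Prop) (u v : List α) : Prop :=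
  u.length < v.length ∨ (u.length = v.length ∧ List.Lex r u v)

/-- Reflexive deglex order on words. -/
def WLe (r : α → α → Prop) (u v : List α) : Prop :=
  WLt r u v ∨ u = v

/-- `w` is the deglex-leading monomial of `f`. -/
def IsLM (r : α → α → Prop) (f : MonoidAlgebra K (FreeMonoid α)) (w : List α) : Prop :=
  FreeMonoid.ofList w ∈ f.coeff.support ∧
    ∀ u ∈ f.coeff.support, u ≠ FreeMonoid.ofList w → WLt r (FreeMonoid.toList u) w

/-- `p` is a submonomial of `w`. -/
def Submono (p w : List α) : Prop := ∃ l r, w = l ++ p ++ r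

/-- `f` is reduced to zero by the set `G`: `f = Σ λ_t · A_t · g_t · B_t` with
`T(A_t · g_t · B_t) ⪯ T(f)` for every `t` (and `f = 0` qualifies vacuously). -/
def Red0 (r : α → α → Prop) (G : Set (MonoidAlgebra K (FreeMonoid α)))
    (f : MonoidAlgebra K (FreeMonoid α)) : Prop :=
  f = 0 ∨
    ∃ (N : ℕ) (lam : Fin N → K) (A B : Fin N → List α)
      (g : Fin N → MonoidAlgebra K (FreeMonoid α)) (w : List α),
      (∀ t, g t ∈ G) ∧
      f = ∑ t, lam t • (Mw (A t) * g t * Mw (B t)) ∧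
      IsLM r f w ∧
      ∀ t u, IsLM r (Mw (A t) * g t * Mw (B t)) u → WLe r u w

/-- `(f, R; g, L)` is an S-quadruplet of `G`:  `f, g ∈ G`, `0 < |L| < |f|`,
`0 < |R| < |g|`, and `T(f)·R = L·T(g)`. -/
def IsSQuad (r : α → α → Prop) (G : Set (MonoidAlgebra K (FreeMonoid α)))
    (f : MonoidAlgebra K (FreeMonoid α)) (R : List α)
    (g : MonoidAlgebra K (FreeMonoid α)) (L : List α) : Prop :=
  f ∈ G ∧ g ∈ G ∧
    ∃ tf tg, IsLM r f tf ∧ IsLM r g tg ∧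
      0 < L.length ∧ L.length < tf.length ∧
      0 < R.length ∧ R.length < tg.length ∧
      tf ++ R = L ++ tg

/-- A clear S-quadruplet: the leader `T(f)·R`, with its first and last letters deleted,
has no leading monomial of an element of `G` as a submonomial. -/
def IsClearSQuad (r : α → α → Prop) (G : Set (MonoidAlgebra K (FreeMonoid α)))
    (f : MonoidAlgebra K (FreeMonoid α)) (R : List α)
    (g : MonoidAlgebra K (FreeMonoid α)) (L : List α) : Prop :=
  IsSQuad r G f R g L ∧
    ∀ tf, IsLM r f tf → ∀ g' ∈ G, ∀ tg', IsLM r g' tg' →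
      ¬ Submono tg' (((tf ++ R).drop 1).dropLast)

end Generic

/-! ### The quaternionic alphabet -/

/-- The alphabet `𝒜`: quaternionic letters `q l`, conjugate letters `qbar l` (`l < n`),
and the basis letters `i, j, k`. -/
inductive Letter (n : ℕ) where
  | q (l : Fin n)
  | qbar (l : Fin n)
  | i
  | j
  | k
deriving DecidableEq

namespace Letter

/-- Rank realizing the conjugate-alternating order
`q 0 ≺ qbar 0 ≺ q 1 ≺ qbar 1 ≺ ⋯ ≺ i ≺ j ≺ k`. -/
def rank {n : ℕ} : Letter n → ℕ
  | q l => 2 * l.val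
  | qbar l => 2 * l.val + 1
  | i => 2 * n
  | j => 2 * n + 1
  | k => 2 * n + 2

/-- The conjugate letter: `q l ↔ qbar l`; basis letters are fixed. -/
def conj {n : ℕ} : Letter n → Letter n
  | q l => qbar l
  | qbar l => q l
  | i => i
  | j => j
  | k => k

/-- Whether a letter is one of the basis letters `i, j, k` (the set `ℰ`). -/
def isE {n : ℕ} : Letter n → Bool
  | i => true
  | j => true
  | k => true
  | _ => false

end Letter

/-- The conjugate-alternating strict order on letters. -/
def llt {n : ℕ} (a b : Letter n) : Prop := a.rank < b.rank

/-- The conjugate-alternating order on letters (reflexive version). -/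
def lle {n : ℕ} (a b : Letter n) : Prop := a.rank ≤ b.rank

/-- The free associative algebra `K⟨𝒜⟩`. -/
abbrev FA (n : ℕ) (K : Type*) [Field K] := MonoidAlgebra K (FreeMonoid (Letter n))

/-- The bracket of a monomial: `[w] = w + w̄`, where conjugation is the anti-automorphism
sending `q l ↦ qbar l`, `qbar l ↦ q l` and `e ↦ -e` for basis letters `e`. -/
noncomputable def br {n : ℕ} {K : Type*} [Field K] (w : List (Letter n)) : FA n K :=
  Mw w + ((-1 : K) ^ (w.filter (fun a => a.isE)).length : K) • Mw ((w.map Letter.conj).reverse)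

/-! ### The defining ideal ℐ -/

/-- The generators of the defining ideal `ℐ`:
(1) the multiplication table of `i, j, k`;
(2) the conjugate-defining relations `2q̄ + q + iqi + jqj + kqk`;
(3) commutativity of the coordinate brackets `[q]`, `[iq]`, `[jq]`, `[kq]`
with every letter. -/
def Igens (n : ℕ) (K : Type*) [Field K] : Set (FA n K) :=
  {p | p = Mw [Letter.i, Letter.i] + 1 ∨ p = Mw [Letter.j, Letter.j] + 1 ∨
       p = Mw [Letter.k, Letter.k] + 1 ∨
       p = Mw [Letter.i, Letter.j] - Mw [Letter.k] ∨
       p = Mw [Letter.j, Letter.i] + Mw [Letter.k] ∨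
       p = Mw [Letter.i, Letter.k] + Mw [Letter.j] ∨
       p = Mw [Letter.k, Letter.i] - Mw [Letter.j] ∨
       p = Mw [Letter.k, Letter.j] + Mw [Letter.i] ∨
       p = Mw [Letter.j, Letter.k] - Mw [Letter.i]} ∪
  {p | ∃ l : Fin n,
       p = (2 : K) • Mw [Letter.qbar l] + Mw [Letter.q l]
           + Mw [Letter.i, Letter.q l, Letter.i]
           + Mw [Letter.j, Letter.q l, Letter.j]
           + Mw [Letter.k, Letter.q l, Letter.k]} ∪
  {p | ∃ (a : Letter n) (l : Fin n),
       p = Mw [a] * br [Letter.q l] - br [Letter.q l] * Mw [a] ∨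
       p = Mw [a] * br [Letter.i, Letter.q l] - br [Letter.i, Letter.q l] * Mw [a] ∨
       p = Mw [a] * br [Letter.j, Letter.q l] - br [Letter.j, Letter.q l] * Mw [a] ∨
       p = Mw [a] * br [Letter.k, Letter.q l] - br [Letter.k, Letter.q l] * Mw [a]}

/-- The defining ideal `ℐ` of the quaternionic polynomial algebra. -/
noncomputable def Iideal (n : ℕ) (K : Type*) [Field K] : TwoSidedIdeal (FA n K) :=
  TwoSidedIdeal.span (Igens n K)

/-! ### The conjectured Gröbner basis BG (parametrized by a letter substitution σ) -/

/-- The monomial `w`, with the substitution `σ` applied letterwise. -/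
noncomputable def Mσ {n : ℕ} {K : Type*} [Field K] (σ : Letter n → Letter n) (w : List (Letter n)) :
    FA n K := Mw (w.map σ)

/-- The bracket `[w]`, with the substitution `σ` applied letterwise before bracketing. -/
noncomputable def Brσ {n : ℕ} {K : Type*} [Field K] (σ : Letter n → Letter n) (w : List (Letter n)) :
    FA n K := br (w.map σ)

/-- The family `BGm` (`m ≥ 5`), with substitution `σ` applied:
`3·[2·A·y·1] − [2·A·y·1]·3` where `A` is a nonempty non-decreasing word over `𝒬 ∪ 𝒬̄` with
`3 ⪯ A`, every letter of `A` is `≺ y`, and `y ∈ 𝒬 ∪ ℰ`. -/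
def BGmSet (n : ℕ) (K : Type*) [Field K] (σ : Letter n → Letter n) : Set (FA n K) :=
  {p | ∃ (a b c : Fin n) (A : List (Letter n)) (y : Letter n),
        a < b ∧ b < c ∧ A ≠ [] ∧
        (∀ x ∈ A, ∃ l : Fin n, x = Letter.q l ∨ x = Letter.qbar l) ∧
        List.Chain' lle (Letter.q c :: A) ∧
        ((∃ l : Fin n, y = Letter.q l) ∨ y.isE) ∧
        (∀ x ∈ A, llt x y) ∧
        p = Mσ σ [Letter.q c] * Brσ σ ([Letter.q b] ++ A ++ [y, Letter.q a])
            - Brσ σ ([Letter.q b] ++ A ++ [y, Letter.q a]) * Mσ σ [Letter.q c]}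

/-- The set `BG` (with letter substitution `σ`; `BG` itself is `BGset n K id`).
Here `a ≺ b ≺ c ≺ d` in `Fin n` play the roles of the letters `1 ≺ 2 ≺ 3 ≺ 4` of `𝒬`,
and `e, e'` are basis letters. -/
def BGset (n : ℕ) (K : Type*) [Field K] (σ : Letter n → Letter n) : Set (FA n K) :=
  -- BG2(a)
  {p | p = Mσ σ [Letter.i, Letter.i] + 1 ∨ p = Mσ σ [Letter.j, Letter.j] + 1 ∨
       p = Mσ σ [Letter.k, Letter.k] + 1 ∨
       p = Mσ σ [Letter.i, Letter.j] - Mσ σ [Letter.k] ∨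
       p = Mσ σ [Letter.j, Letter.i] + Mσ σ [Letter.k] ∨
       p = Mσ σ [Letter.j, Letter.k] - Mσ σ [Letter.i] ∨
       p = Mσ σ [Letter.k, Letter.j] + Mσ σ [Letter.i] ∨
       p = Mσ σ [Letter.k, Letter.i] - Mσ σ [Letter.j] ∨
       p = Mσ σ [Letter.i, Letter.k] + Mσ σ [Letter.j]} ∪
  -- BG2(b)
  {p | ∃ a : Fin n,
       p = Mσ σ [Letter.qbar a, Letter.q a] - Mσ σ [Letter.q a, Letter.qbar a]} ∪
  {p | ∃ a b : Fin n, a < b ∧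
       (p = Brσ σ [Letter.q b] * Mσ σ [Letter.qbar a]
            - Mσ σ [Letter.qbar a] * Brσ σ [Letter.q b] ∨
        p = Brσ σ [Letter.q b] * Mσ σ [Letter.q a]
            - Mσ σ [Letter.q a] * Brσ σ [Letter.q b])} ∪
  -- BG2(c)
  {p | ∃ a b : Fin n, a < b ∧
       p = Mσ σ [Letter.q b] * Brσ σ [Letter.q a] - Brσ σ [Letter.q a] * Mσ σ [Letter.q b]} ∪
  {p | ∃ (a : Fin n) (e : Letter n), e.isE ∧
       p = Mσ σ [e] * Brσ σ [Letter.q a] - Brσ σ [Letter.q a] * Mσ σ [e]} ∪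
  -- BG3(a)
  {p | ∃ a : Fin n,
       p = Mσ σ [Letter.k, Letter.q a, Letter.k] + Mσ σ [Letter.j, Letter.q a, Letter.j]
           + Mσ σ [Letter.i, Letter.q a, Letter.i]
           + (2 : K) • Mσ σ [Letter.qbar a] + Mσ σ [Letter.q a]} ∪
  -- BG3(b)
  {p | ∃ a b c : Fin n, a < b ∧ b < c ∧
       (p = Brσ σ [Letter.q c, Letter.q b] * Mσ σ [Letter.q a]
            - Mσ σ [Letter.q a] * Brσ σ [Letter.q c, Letter.q b] ∨
        p = Brσ σ [Letter.q c, Letter.q a] * Mσ σ [Letter.qbar b]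
            - Mσ σ [Letter.qbar b] * Brσ σ [Letter.q c, Letter.q a] ∨
        p = Brσ σ [Letter.q c, Letter.q a] * Mσ σ [Letter.q b]
            - Mσ σ [Letter.q b] * Brσ σ [Letter.q c, Letter.q a])} ∪
  {p | ∃ a b : Fin n, a < b ∧
       (p = Brσ σ [Letter.q b, Letter.q a] * Mσ σ [Letter.qbar a]
            - Mσ σ [Letter.qbar a] * Brσ σ [Letter.q b, Letter.q a] ∨
        p = Brσ σ [Letter.q b, Letter.q a] * Mσ σ [Letter.q a]
            - Mσ σ [Letter.q a] * Brσ σ [Letter.q b, Letter.q a])} ∪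
  {p | ∃ (a b : Fin n) (e : Letter n), a < b ∧ e.isE ∧
       (p = Brσ σ [e, Letter.q b] * Mσ σ [Letter.q a]
            - Mσ σ [Letter.q a] * Brσ σ [e, Letter.q b] ∨
        p = Brσ σ [e, Letter.q a] * Mσ σ [Letter.q b]
            - Mσ σ [Letter.q b] * Brσ σ [e, Letter.q a] ∨
        p = Brσ σ [e, Letter.q a] * Mσ σ [Letter.qbar b]
            - Mσ σ [Letter.qbar b] * Brσ σ [e, Letter.q a])} ∪
  {p | ∃ (a : Fin n) (e : Letter n), e.isE ∧
       (p = Brσ σ [e, Letter.q a] * Mσ σ [Letter.q a]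
            - Mσ σ [Letter.q a] * Brσ σ [e, Letter.q a] ∨
        p = Brσ σ [e, Letter.q a] * Mσ σ [Letter.qbar a]
            - Mσ σ [Letter.qbar a] * Brσ σ [e, Letter.q a])} ∪
  {p | ∃ a : Fin n,
       (p = Brσ σ [Letter.j, Letter.q a] * Mσ σ [Letter.i]
            - Mσ σ [Letter.i] * Brσ σ [Letter.j, Letter.q a] ∨
        p = Brσ σ [Letter.k, Letter.q a] * Mσ σ [Letter.i]
            - Mσ σ [Letter.i] * Brσ σ [Letter.k, Letter.q a] ∨
        p = Brσ σ [Letter.k, Letter.q a] * Mσ σ [Letter.j]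
            - Mσ σ [Letter.j] * Brσ σ [Letter.k, Letter.q a])} ∪
  -- BG3(c)
  {p | ∃ a b : Fin n, a < b ∧
       p = Mσ σ [Letter.q b] * Brσ σ [Letter.q b, Letter.q a]
           - Brσ σ [Letter.q b, Letter.q a] * Mσ σ [Letter.q b]} ∪
  -- BG4
  {p | ∃ a b c : Fin n, a < b ∧ b < c ∧
       p = Mσ σ [Letter.q c] * Brσ σ [Letter.q b, Letter.q c, Letter.q a]
           - Brσ σ [Letter.q b, Letter.q c, Letter.q a] * Mσ σ [Letter.q c]} ∪
  {p | ∃ a b c d : Fin n, a < b ∧ b < c ∧ c < d ∧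
       p = Mσ σ [Letter.q c] * Brσ σ [Letter.q b, Letter.q d, Letter.q a]
           - Brσ σ [Letter.q b, Letter.q d, Letter.q a] * Mσ σ [Letter.q c]} ∪
  {p | ∃ (a b c : Fin n) (e : Letter n), a < b ∧ b < c ∧ e.isE ∧
       p = Mσ σ [Letter.q c] * Brσ σ [Letter.q b, e, Letter.q a]
           - Brσ σ [Letter.q b, e, Letter.q a] * Mσ σ [Letter.q c]} ∪
  {p | ∃ (a b : Fin n) (e e' : Letter n), a < b ∧ e.isE ∧ e'.isE ∧ lle e' e ∧
       ¬(e' = Letter.k ∧ e = Letter.k) ∧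
       p = Mσ σ [e'] * Brσ σ [Letter.q b, e, Letter.q a]
           - Brσ σ [Letter.q b, e, Letter.q a] * Mσ σ [e']} ∪
  -- BGm, m ≥ 5
  BGmSet n K σ

/-- The conjectured Gröbner basis `BG`. -/
def BG (n : ℕ) (K : Type*) [Field K] : Set (FA n K) := BGset n K id

/-- The normal-form shape of Theorem "Normal form": `M` is a submonomial of a word
`A_1 p_1 f_1 ⋯ A_r p_r f_r A_{r+1} e_1 f_{r+1} ⋯ e_s f_{r+s} e_{s+1}` satisfying
conditions (i)–(v).  (Indices are 0-based: `A 0, …, A r`; `p 0, …, p (r-1)`;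
`f 0, …, f (r+s-1)`; `e 0, …, e s`.) -/
def NormalShape (n : ℕ) (M : List (Letter n)) : Prop :=
  ∃ (r s : ℕ) (A : ℕ → List (Letter n)) (p f e : ℕ → Letter n),
    (∀ t < r, ∃ l : Fin n, p t = Letter.q l) ∧
    (∀ t < r + s, ∃ l : Fin n, f t = Letter.q l) ∧
    (∀ t < s + 1, (e t).isE) ∧
    (∀ t1 < s + 1, ∀ t2 < s + 1, e t1 = Letter.k → e t2 = Letter.k → t1 = t2) ∧
    (∀ t < r + 1,
      (∀ x ∈ A t, ∃ l : Fin n, x = Letter.q l ∨ x = Letter.qbar l) ∧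
      List.Chain' lle (A t)) ∧
    List.Chain' lle ((List.range r).map p ++ (List.range (s + 1)).map e) ∧
    List.Chain' lle ((List.range (r + s)).map f) ∧
    List.Chain' lle
      ((List.range r).flatMap (fun t => A t ++ [p t]) ++ A r ++ (List.range (s + 1)).map e) ∧
    (∀ t < r, llt (f t) (p t) ∧ ∀ x ∈ A t, llt x (p t)) ∧
    Submono M
      ((List.range r).flatMap (fun t => A t ++ [p t, f t]) ++ A r
        ++ (List.range s).flatMap (fun t => [e t, f (r + t)]) ++ [e s])

/-- A conjugation substitution: for each `l`, either both `q l` and `qbar l` are fixed or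
both are swapped; the basis letters are fixed. -/
def IsConjSub {n : ℕ} (σ : Letter n → Letter n) : Prop :=
  (∀ l : Fin n,
    (σ (Letter.q l) = Letter.q l ∧ σ (Letter.qbar l) = Letter.qbar l) ∨
    (σ (Letter.q l) = Letter.qbar l ∧ σ (Letter.qbar l) = Letter.q l)) ∧
  σ Letter.i = Letter.i ∧ σ Letter.j = Letter.j ∧ σ Letter.k = Letter.k

/-- The decomposition property for `f·R` from Proposition "k-decomp equiv":
`f·R = Σ_i λ_i·L_i·g_i·R_i` with `T(L_i·g_i·R_i) ⪯ T(f)·R` for every `i`, and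
`T(L_i·g_i·R_i) ≺ T(f)·R` whenever `L_i` is the empty monomial. -/
def SDecomp {α : Type*} {K : Type*} [Field K] (r : α → α → Prop)
    (G : Set (MonoidAlgebra K (FreeMonoid α)))
    (f : MonoidAlgebra K (FreeMonoid α)) (R : List α) : Prop :=
  ∃ (N : ℕ) (lam : Fin N → K) (Li Ri : Fin N → List α)
    (gi : Fin N → MonoidAlgebra K (FreeMonoid α)),
    (∀ i, gi i ∈ G) ∧
    f * Mw R = ∑ i, lam i • (Mw (Li i) * gi i * Mw (Ri i)) ∧
    ∀ tf, IsLM r f tf →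
      (∀ i u, IsLM r (Mw (Li i) * gi i * Mw (Ri i)) u → WLe r u (tf ++ R)) ∧
      (∀ i, Li i = [] →
        ∀ u, IsLM r (Mw (Li i) * gi i * Mw (Ri i)) u → WLt r u (tf ++ R))

/-- `G` is a Gröbner basis (w.r.t. the deglex order induced by `r`) of the two-sided
ideal `J`: `G ⊆ J`, `G` generates `J`, and the leading monomial of every nonzero element
of `J` has the leading monomial of some element of `G` as a submonomial. -/
def IsGroebnerBasis {α : Type*} {K : Type*} [Field K] (r : α → α → Prop)
    (G : Set (MonoidAlgebra K (FreeMonoid α)))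
    (J : TwoSidedIdeal (MonoidAlgebra K (FreeMonoid α))) : Prop :=
  (∀ g ∈ G, g ∈ J) ∧
  TwoSidedIdeal.span G = J ∧
  ∀ h, h ∈ J → h ≠ 0 →
    ∃ th, IsLM r h th ∧ ∃ g ∈ G, ∃ tg, IsLM r g tg ∧ Submono tg th


/-! ### Auxiliary development -/

section AuxDev

open Letter

variable {n : ℕ} {K : Type*} [Field K]

lemma Mw_nil : (Mw ([] : List (Letter n)) : FA n K) = 1 := rfl

lemma Mw_mul (u v : List (Letter n)) : (Mw u : FA n K) * Mw v = Mw (u ++ v) := by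
  simp [Mw, MonoidAlgebra.single_mul_single, FreeMonoid.ofList_append]

/-- The conjugation anti-automorphism, packaged as an algebra map into the opposite algebra. -/
noncomputable def stO : FA n K →ₐ[K] (FA n K)ᵐᵒᵖ :=
  MonoidAlgebra.lift K (FA n K)ᵐᵒᵖ (FreeMonoid (Letter n))
    (FreeMonoid.lift fun a => MulOpposite.op ((if a.isE then (-1:K) else 1) • Mw [a.conj]))

/-- Conjugation as a function `FA → FA`. -/
noncomputable def stf (f : FA n K) : FA n K := (stO f).unop

lemma stf_mul (f g : FA n K) : stf (f * g) = stf g * stf f := by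
  simp [stf, map_mul]

lemma stf_add (f g : FA n K) : stf (f + g) = stf f + stf g := by simp [stf, map_add]

lemma stf_one : stf (1 : FA n K) = 1 := by simp [stf, map_one]

lemma stf_smul (c : K) (f : FA n K) : stf (c • f) = c • stf f := by
  simp [stf, map_smul]

lemma stf_neg (f : FA n K) : stf (-f) = - stf f := by simp [stf, map_neg]

lemma stf_letter (a : Letter n) :
    stf (Mw [a] : FA n K) = (if a.isE then (-1:K) else 1) • Mw [a.conj] := by
  have h1 : (Mw [a] : FA n K) = MonoidAlgebra.single (FreeMonoid.of a) 1 := rfl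
  rw [stf, stO, h1, MonoidAlgebra.lift_single]
  simp

lemma conj_E {a : Letter n} (ha : a.isE) : a.conj = a := by
  cases a <;> simp_all [Letter.isE, Letter.conj]

lemma stf_E {a : Letter n} (ha : a.isE) : stf (Mw [a] : FA n K) = -

Mw [a] := by
  rw [stf_letter, conj_E ha]
  simp [ha]

lemma stf_q (l : Fin n) : stf (Mw [Letter.q l] : FA n K) = Mw [Letter.qbar l] := by
  rw [stf_letter]; simp [Letter.isE, Letter.conj]

lemma stf_qbar (l : Fin n) : stf (Mw [Letter.qbar l] : FA n K) = Mw [Letter.q l] := by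
  rw [stf_letter]; simp [Letter.isE, Letter.conj]

lemma stf_Mw (w : List (Letter n)) :
    stf (Mw w : FA n K)
      = ((-1 : K) ^ (w.filter (fun a => a.isE)).length) • Mw ((w.map Letter.conj).reverse) := by
  induction w with
  | nil => simp [Mw_nil, stf_one]
  | cons a w ih =>
      have : (Mw (a :: w) : FA n K) = Mw [a] * Mw w := by rw [Mw_mul]; rfl
      rw [this, stf_mul, ih, stf_letter]
      by_cases ha : a.isE
      · simp only [ha, if_pos, List.filter_cons, List.map_cons, List.reverse_cons]
        rw [smul_mul_smul_comm, Mw_mul]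
        simp [ha, pow_succ, mul_comm]
      · simp only [ha, List.filter_cons, List.map_cons, List.reverse_cons]
        rw [smul_mul_smul_comm, Mw_mul]
        simp [ha]

lemma br_eq (w : List (Letter n)) : (br w : FA n K) = Mw w + stf (Mw w) := by
  rw [br, stf_Mw]

end AuxDev

section AuxDev2

open Letter

variable {n : ℕ} {K : Type*} [Field K]

/-- Elements commuting with everything modulo the two-sided ideal `J`. -/
def Zc (J : TwoSidedIdeal (FA n K)) : Set (FA n K) := {f | ∀ g, f * g - g * f ∈ J}

lemma Jsmul {J : TwoSidedIdeal (FA n K)} (c : K) {x} (hx : x ∈ J) : c • x ∈ J := by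
  rw [Algebra.smul_def]; exact J.mul_mem_left _ _ hx

lemma Zc_mem {J : TwoSidedIdeal (FA n K)} {f} (hf : f ∈ J) : f ∈ Zc J :=
  fun g => J.sub_mem (J.mul_mem_right _ _ hf) (J.mul_mem_left _ _ hf)

lemma Zc_add {J : TwoSidedIdeal (FA n K)} {f g} (hf : f ∈ Zc J) (hg : g ∈ Zc J) :
    f + g ∈ Zc J := fun x => by
  have e : (f+g)*x - x*(f+g) = (f*x - x*f) + (g*x - x*g) := by noncomm_ring
  rw [e]; exact J.add_mem (hf x) (hg x)

lemma Zc_neg {J : TwoSidedIdeal (FA n K)} {f} (hf : f ∈ Zc J) : -f ∈ Zc J := fun x => by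
  have e : (-f)*x - x*(-f) = -(f*x - x*f) := by noncomm_ring
  rw [e]; exact J.neg_mem (hf x)

lemma Zc_sub {J : TwoSidedIdeal (FA n K)} {f g} (hf : f ∈ Zc J) (hg : g ∈ Zc J) :
    f - g ∈ Zc J := by
  have := Zc_add hf (Zc_neg hg); simpa [sub_eq_add_neg] using this

lemma Zc_smul {J : TwoSidedIdeal (FA n K)} (c : K) {f} (hf : f ∈ Zc J) : c • f ∈ Zc J :=
  fun x => by
  have e : (c • f)*x - x*(c • f) = c • (f*x - x*f) := by
    rw [smul_mul_assoc, mul_smul_comm, smul_sub]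
  rw [e]; exact Jsmul c (hf x)

lemma Zc_mul {J : TwoSidedIdeal (FA n K)} {f g} (hf : f ∈ Zc J) (hg : g ∈ Zc J) :
    f * g ∈ Zc J := fun x => by
  have e : (f*g)*x - x*(f*g) = f*(g*x - x*g) + (f*x - x*f)*g := by noncomm_ring
  rw [e]; exact J.add_mem (J.mul_mem_left _ _ (hg x)) (J.mul_mem_right _ _ (hf x))

lemma Zc_congr {J : TwoSidedIdeal (FA n K)} {f f'} (h : f - f' ∈ J) (hf' : f' ∈ Zc J) :
    f ∈ Zc J := fun x => by
  have e : f*x - x*f = ((f - f')*x - x*(f-f')) + (f'*x - x*f') := by noncomm_ring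
  rw [e]; exact J.add_mem (Zc_mem h x) (hf' x)

lemma Zc_one {J : TwoSidedIdeal (FA n K)} : (1 : FA n K) ∈ Zc J := fun x => by
  simpa using J.zero_mem

lemma Zc_of_letters {J : TwoSidedIdeal (FA n K)} {f}
    (h : ∀ a : Letter n, Mw [a] * f - f * Mw [a] ∈ J) : f ∈ Zc J := by
  have hw : ∀ w : List (Letter n), f * Mw w - Mw w * f ∈ J := by
    intro w
    induction w with
    | nil => simpa [Mw_nil] using J.zero_mem
    | cons a w ih =>
        have hcons : (Mw (a::w) : FA n K) = Mw [a] * Mw w := by rw [Mw_mul]; rfl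
        have ha' : f * Mw [a] - Mw [a] * f ∈ J := by
          have := J.neg_mem (h a); simpa using this
        have e : f * (Mw [a] * Mw w) - (Mw [a] * Mw w) * f
            = (f * Mw [a] - Mw [a] * f) * Mw w + Mw [a] * (f * Mw w - Mw w * f) := by
          noncomm_ring
        rw [hcons, e]
        exact J.add_mem (J.mul_mem_right _ _ ha') (J.mul_mem_left _ _ ih)
  intro g
  induction g using MonoidAlgebra.induction_on with
  | of x =>
      have hx : (MonoidAlgebra.of K (FreeMonoid (Letter n)) x : FA n K)
          = Mw (FreeMonoid.toList x) := by
        simp [Mw, MonoidAlgebra.of_apply]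
      rw [hx]; exact hw _
  | add p q hp hq =>
      have e : f*(p+q) - (p+q)*f = (f*p - p*f) + (f*q - q*f) := by noncomm_ring
      rw [e]; exact J.add_mem hp hq
  | smul c p hp =>
      have e : f * (c • p) - (c • p) * f = c • (f * p - p * f) := by
        rw [smul_mul_assoc, mul_smul_comm, smul_sub]
      rw [e]; exact Jsmul c hp

/-! Membership of the generators of `ℐ`. -/

lemma Ig_ii : (Mw [Letter.i, Letter.i] + 1 : FA n K) ∈ Iideal n K :=
  TwoSidedIdeal.subset_span (Set.mem_union_left _ (Set.mem_union_left _ (Or.inl rfl)))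

lemma Ig_jj : (Mw [Letter.j, Letter.j] + 1 : FA n K) ∈ Iideal n K :=
  TwoSidedIdeal.subset_span (Set.mem_union_left _ (Set.mem_union_left _ (Or.inr (Or.inl rfl))))

lemma Ig_kk : (Mw [Letter.k, Letter.k] + 1 : FA n K) ∈ Iideal n K :=
  TwoSidedIdeal.subset_span (Set.mem_union_left _ (Set.mem_union_left _
    (Or.inr (Or.inr (Or.inl rfl)))))

lemma Ig_ij : (Mw [Letter.i, Letter.j] - Mw [Letter.k] : FA n K) ∈ Iideal n K :=
  TwoSidedIdeal.subset_span (Set.mem_union_left _ (Set.mem_union_left _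
    (Or.inr (Or.inr (Or.inr (Or.inl rfl))))))

lemma Ig_ji : (Mw [Letter.j, Letter.i] + Mw [Letter.k] : FA n K) ∈ Iideal n K :=
  TwoSidedIdeal.subset_span (Set.mem_union_left _ (Set.mem_union_left _
    (Or.inr (Or.inr (Or.inr (Or.inr (Or.inl rfl)))))))

lemma Ig_ik : (Mw [Letter.i, Letter.k] + Mw [Letter.j] : FA n K) ∈ Iideal n K :=
  TwoSidedIdeal.subset_span (Set.mem_union_left _ (Set.mem_union_left _
    (Or.inr (Or.inr (Or.inr (Or.inr (Or.inr (Or.inl rfl))))))))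

lemma Ig_ki : (Mw [Letter.k, Letter.i] - Mw [Letter.j] : FA n K) ∈ Iideal n K :=
  TwoSidedIdeal.subset_span (Set.mem_union_left _ (Set.mem_union_left _
    (Or.inr (Or.inr (Or.inr (Or.inr (Or.inr (Or.inr (Or.inl rfl)))))))))

lemma Ig_kj : (Mw [Letter.k, Letter.j] + Mw [Letter.i] : FA n K) ∈ Iideal n K :=
  TwoSidedIdeal.subset_span (Set.mem_union_left _ (Set.mem_union_left _
    (Or.inr (Or.inr (Or.inr (Or.inr (Or.inr (Or.inr (Or.inr (Or.inl rfl))))))))))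

lemma Ig_jk : (Mw [Letter.j, Letter.k] - Mw [Letter.i] : FA n K) ∈ Iideal n K :=
  TwoSidedIdeal.subset_span (Set.mem_union_left _ (Set.mem_union_left _
    (Or.inr (Or.inr (Or.inr (Or.inr (Or.inr (Or.inr (Or.inr (Or.inr rfl))))))))))

lemma Ig_rel2 (l : Fin n) :
    ((2 : K) • Mw [Letter.qbar l] + Mw [Letter.q l]
      + Mw [Letter.i, Letter.q l, Letter.i]
      + Mw [Letter.j, Letter.q l, Letter.j]
      + Mw [Letter.k, Letter.q l, Letter.k] : FA n K) ∈ Iideal n K :=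
  TwoSidedIdeal.subset_span (Set.mem_union_left _ (Set.mem_union_right _ ⟨l, rfl⟩))

lemma Ig_comm_q (a : Letter n) (l : Fin n) :
    (Mw [a] * br [Letter.q l] - br [Letter.q l] * Mw [a] : FA n K) ∈ Iideal n K :=
  TwoSidedIdeal.subset_span (Set.mem_union_right _ ⟨a, l, Or.inl rfl⟩)

lemma Ig_comm_iq (a : Letter n) (l : Fin n) :
    (Mw [a] * br [Letter.i, Letter.q l] - br [Letter.i, Letter.q l] * Mw [a] : FA n K)
      ∈ Iideal n K :=
  TwoSidedIdeal.subset_span (Set.mem_union_right _ ⟨a, l, Or.inr (Or.inl rfl)⟩)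

lemma Ig_comm_jq (a : Letter n) (l : Fin n) :
    (Mw [a] * br [Letter.j, Letter.q l] - br [Letter.j, Letter.q l] * Mw [a] : FA n K)
      ∈ Iideal n K :=
  TwoSidedIdeal.subset_span (Set.mem_union_right _ ⟨a, l, Or.inr (Or.inr (Or.inl rfl))⟩)

lemma Ig_comm_kq (a : Letter n) (l : Fin n) :
    (Mw [a] * br [Letter.k, Letter.q l] - br [Letter.k, Letter.q l] * Mw [a] : FA n K)
      ∈ Iideal n K :=
  TwoSidedIdeal.subset_span (Set.mem_union_right _ ⟨a, l, Or.inr (Or.inr (Or.inr rfl))⟩)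

/-- The brackets of the single letters `q l` are central mod `ℐ`. -/
lemma Z_brq (l : Fin n) : (br [Letter.q l] : FA n K) ∈ Zc (Iideal n K) :=
  Zc_of_letters (fun a => Ig_comm_q a l)

lemma Z_breq {e : Letter n} (he : e.isE) (l : Fin n) :
    (br [e, Letter.q l] : FA n K) ∈ Zc (Iideal n K) := by
  cases e with
  | i => exact Zc_of_letters (fun a => Ig_comm_iq a l)
  | j => exact Zc_of_letters (fun a => Ig_comm_jq a l)
  | k => exact Zc_of_letters (fun a => Ig_comm_kq a l)
  | q => simp [Letter.isE] at he
  | qbar => simp [Letter.isE] at he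

end AuxDev2

section AuxDev3

open Letter

variable {n : ℕ} {K : Type*} [Field K]

lemma Mw_cons (a : Letter n) (v : List (Letter n)) :
    (Mw (a::v) : FA n K) = Mw [a] * Mw v := by rw [Mw_mul]; rfl

lemma isE_i : (Letter.i : Letter n).isE = true := rfl
lemma isE_q (l : Fin n) : (Letter.q l).isE = false := rfl
lemma isE_qbar (l : Fin n) : (Letter.qbar l).isE = false := rfl
lemma conj_q (l : Fin n) : (Letter.q l).conj = Letter.qbar l := rfl
lemma isE_j : (Letter.j : Letter n).isE = true := rfl
lemma isE_k : (Letter.k : Letter n).isE = true := rfl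

lemma Z_mid {J : TwoSidedIdeal (FA n K)} {T A B C D : FA n K}
    (hT : T ∈ Zc J) (h : A*B + C*D ∈ Zc J) : A*T*B + C*T*D ∈ Zc J := by
  apply Zc_congr _ (Zc_mul hT h)
  have e : A*T*B + C*T*D - T*(A*B + C*D) = (A*T - T*A)*B + (C*T - T*C)*D := by noncomm_ring
  rw [e]
  have h1 : A*T - T*A ∈ J := by have := J.neg_mem (hT A); simpa using this
  have h2 : C*T - T*C ∈ J := by have := J.neg_mem (hT C); simpa using this
  exact J.add_mem (J.mul_mem_right _ _ h1) (J.mul_mem_right _ _ h2)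

lemma Zc_of_double (hK : (2:K) ≠ 0) {J : TwoSidedIdeal (FA n K)} {f : FA n K}
    (h : f + f ∈ Zc J) : f ∈ Zc J := by
  have h2 := Zc_smul ((2:K)⁻¹) h
  rwa [show (2:K)⁻¹ • (f + f) = f by
    rw [← two_smul K f, smul_smul, inv_mul_cancel₀ hK, one_smul]] at h2

lemma br_q (l : Fin n) : (br [Letter.q l] : FA n K) = Mw [Letter.q l] + Mw [Letter.qbar l] := by
  have h1 : (([Letter.q l] : List (Letter n)).filter (fun a => a.isE)).length = 0 := rfl
  have h2 : ((([Letter.q l] : List (Letter n)).map Letter.conj).reverse)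
      = [Letter.qbar l] := rfl
  rw [br, h1, h2, pow_zero, one_smul]

lemma br_Eq {e : Letter n} (he : e.isE = true) (l : Fin n) :
    (br [e, Letter.q l] : FA n K) = Mw [e, Letter.q l] - Mw [Letter.qbar l, e] := by
  have h1 : (([e, Letter.q l] : List (Letter n)).filter (fun a => a.isE)).length = 1 := by
    simp [he, isE_q]
  have h2 : ((([e, Letter.q l] : List (Letter n)).map Letter.conj).reverse)
      = [Letter.qbar l, e] := by
    simp [conj_E he, conj_q]
  rw [br, h1, h2, pow_one, neg_smul, one_smul, ← sub_eq_add_neg]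

/-- The correction term making the trace identities exact. -/
noncomputable def Gel (l : Fin n) : FA n K :=
  ((2 : K) • Mw [Letter.qbar l] + Mw [Letter.q l]
    + Mw [Letter.i, Letter.q l, Letter.i]
    + Mw [Letter.j, Letter.q l, Letter.j]
    + Mw [Letter.k, Letter.q l, Letter.k])
  - Mw [Letter.qbar l] * (Mw [Letter.i, Letter.i] + 1)
  - Mw [Letter.qbar l] * (Mw [Letter.j, Letter.j] + 1)
  - Mw [Letter.qbar l] * (Mw [Letter.k, Letter.k] + 1)

lemma Gel_mem (l : Fin n) : (Gel l : FA n K) ∈ Iideal n K := by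
  refine (Iideal n K).sub_mem ((Iideal n K).sub_mem ((Iideal n K).sub_mem (Ig_rel2 l)
    ((Iideal n K).mul_mem_left _ _ Ig_ii)) ((Iideal n K).mul_mem_left _ _ Ig_jj))
    ((Iideal n K).mul_mem_left _ _ Ig_kk)

lemma hGbar (l : Fin n) :
    (Mw [Letter.qbar l] + Mw [Letter.qbar l] : FA n K)
      = br [Letter.q l]
        + (br [Letter.i, Letter.q l] * Mw [Letter.i]
          + br [Letter.j, Letter.q l] * Mw [Letter.j]
          + br [Letter.k, Letter.q l] * Mw [Letter.k])
        - Gel l := by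
  rw [br_q, br_Eq isE_i, br_Eq isE_j, br_Eq isE_k]
  simp only [Gel, sub_mul, mul_add, mul_one, two_smul, Mw_mul]
  simp only [List.cons_append, List.nil_append]
  abel

lemma hGq (l : Fin n) :
    (Mw [Letter.q l] + Mw [Letter.q l] : FA n K)
      = br [Letter.q l]
        - (br [Letter.i, Letter.q l] * Mw [Letter.i]
          + br [Letter.j, Letter.q l] * Mw [Letter.j]
          + br [Letter.k, Letter.q l] * Mw [Letter.k])
        + Gel l := by
  rw [br_q, br_Eq isE_i, br_Eq isE_j, br_Eq isE_k]
  simp only [Gel, sub_mul, mul_add, mul_one, two_smul, Mw_mul]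
  simp only [List.cons_append, List.nil_append]
  abel

/-- **Master lemma**: every bracket is central modulo `ℐ`. -/
lemma master (hK : (2:K) ≠ 0) :
    ∀ (m : ℕ) (w : List (Letter n)), w.length ≤ m →
      (Mw w + stf (Mw w) : FA n K) ∈ Zc (Iideal n K) := by
  intro m
  induction m with
  | zero =>
      intro w hw
      have : w = [] := List.eq_nil_of_length_eq_zero (Nat.le_zero.mp hw)
      subst this
      rw [Mw_nil, stf_one]
      exact Zc_add Zc_one Zc_one
  | succ m IH =>
      -- the two-E-headed case
      have hEE : ∀ (e e' : Letter n), e.isE = true → e'.isE = true →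
          ∀ v' : List (Letter n), v'.length + 1 ≤ m →
          (Mw (e::e'::v') + stf (Mw (e::e'::v')) : FA n K) ∈ Zc (Iideal n K) := by
        intro e e' he he' v' hv'
        have hred : ∀ (X X' : FA n K),
            (Mw [e,e'] : FA n K) - X ∈ Iideal n K →
            (Mw [e',e] : FA n K) - X' ∈ Iideal n K →
            X * Mw v' + stf (Mw v') * X' ∈ Zc (Iideal n K) →
            (Mw (e::e'::v') + stf (Mw (e::e'::v')) : FA n K) ∈ Zc (Iideal n K) := by
          intro X X' h1 h2 hZ
          apply Zc_congr _ hZ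
          have hw1 : (Mw (e::e'::v') : FA n K) = Mw [e,e'] * Mw v' := by rw [Mw_mul]; rfl
          have hw2 : stf (Mw (e::e'::v') : FA n K) = stf (Mw v') * Mw [e',e] := by
            rw [hw1, stf_mul]
            congr 1
            have h3 : (Mw [e,e'] : FA n K) = Mw [e] * Mw [e'] := by rw [Mw_mul]; rfl
            rw [h3, stf_mul, stf_E he, stf_E he', neg_mul_neg, Mw_mul]; rfl
          rw [hw2, hw1]
          have e0 : (Mw [e,e'] : FA n K) * Mw v' + stf (Mw v') * Mw [e',e]
              - (X * Mw v' + stf (Mw v') * X')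
              = (Mw [e,e'] - X) * Mw v' + stf (Mw v') * (Mw [e',e] - X') := by noncomm_ring
          rw [e0]
          exact (Iideal n K).add_mem ((Iideal n K).mul_mem_right _ _ h1)
            ((Iideal n K).mul_mem_left _ _ h2)
        have hZshort : (Mw v' + stf (Mw v') : FA n K) ∈ Zc (Iideal n K) :=
          IH v' (le_trans (Nat.le_succ _) hv')
        have hexp : ∀ z : Letter n, z.isE = true →
            ((Mw [z] : FA n K) * Mw v' + stf (Mw v') * (-(Mw [z]))) ∈ Zc (Iideal n K) := by
          intro z hz
          have h := IH (z::v') (by simpa using hv')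
          rwa [Mw_cons z v', stf_mul, stf_E hz] at h
        have hexpneg : ∀ z : Letter n, z.isE = true →
            ((-(Mw [z]) : FA n K) * Mw v' + stf (Mw v') * (Mw [z])) ∈ Zc (Iideal n K) := by
          intro z hz
          have h := Zc_neg (hexp z hz)
          have e0 : -((Mw [z] : FA n K) * Mw v' + stf (Mw v') * (-(Mw [z])))
              = (-(Mw [z])) * Mw v' + stf (Mw v') * (Mw [z]) := by noncomm_ring
          rwa [e0] at h
        have hexp1 : (((-1 : FA n K)) * Mw v' + stf (Mw v') * (-1)) ∈ Zc (Iideal n K) := by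
          have h := Zc_neg hZshort
          have e0 : -((Mw v' : FA n K) + stf (Mw v'))
              = (-1 : FA n K) * Mw v' + stf (Mw v') * (-1) := by noncomm_ring
          rwa [e0] at h
        clear hZshort
        cases e with
        | q l => simp [Letter.isE] at he
        | qbar l => simp [Letter.isE] at he
        | i =>
          cases e' with
          | q l => simp [Letter.isE] at he'
          | qbar l => simp [Letter.isE] at he'
          | i => exact hred (-1) (-1) (by simpa [sub_neg_eq_add] using Ig_ii)
                  (by simpa [sub_neg_eq_add] using Ig_ii) hexp1
          | j => exact hred (Mw [Letter.k]) (-(Mw [Letter.k])) Ig_ij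
                  (by simpa [sub_neg_eq_add] using Ig_ji) (hexp _ isE_k)
          | k => exact hred (-(Mw [Letter.j])) (Mw [Letter.j])
                  (by simpa [sub_neg_eq_add] using Ig_ik) Ig_ki (hexpneg _ isE_j)
        | j =>
          cases e' with
          | q l => simp [Letter.isE] at he'
          | qbar l => simp [Letter.isE] at he'
          | i => exact hred (-(Mw [Letter.k])) (Mw [Letter.k])
                  (by simpa [sub_neg_eq_add] using Ig_ji) Ig_ij (hexpneg _ isE_k)
          | j => exact hred (-1) (-1) (by simpa [sub_neg_eq_add] using Ig_jj)
                  (by simpa [sub_neg_eq_add] using Ig_jj) hexp1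
          | k => exact hred (Mw [Letter.i]) (-(Mw [Letter.i])) Ig_jk
                  (by simpa [sub_neg_eq_add] using Ig_kj) (hexp _ isE_i)
        | k =>
          cases e' with
          | q l => simp [Letter.isE] at he'
          | qbar l => simp [Letter.isE] at he'
          | i => exact hred (Mw [Letter.j]) (-(Mw [Letter.j])) Ig_ki
                  (by simpa [sub_neg_eq_add] using Ig_ik) (hexp _ isE_j)
          | j => exact hred (-(Mw [Letter.i])) (Mw [Letter.i])
                  (by simpa [sub_neg_eq_add] using Ig_kj) Ig_jk (hexpneg _ isE_i)
          | k => exact hred (-1) (-1) (by simpa [sub_neg_eq_add] using Ig_kk)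
                  (by simpa [sub_neg_eq_add] using Ig_kk) hexp1
      -- the E-headed case
      have hEcase : ∀ (e : Letter n), e.isE = true → ∀ u : List (Letter n), u.length ≤ m →
          (Mw (e::u) + stf (Mw (e::u)) : FA n K) ∈ Zc (Iideal n K) := by
        intro e he u hu
        cases u with
        | nil =>
            rw [stf_E he, add_neg_cancel]
            exact Zc_mem (Iideal n K).zero_mem
        | cons y v' =>
            have hv' : v'.length + 1 ≤ m := by simpa using hu
            have hv'' : v'.length ≤ m := le_trans (Nat.le_succ _) hv'
            have hZev' : (Mw (e::v') + stf (Mw (e::v')) : FA n K) ∈ Zc (Iideal n K) :=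
              IH (e::v') (by simpa using hv')
            -- the `qbar`-headed tail case
            have hQB : ∀ l : Fin n,
                (Mw (e::Letter.qbar l::v') + stf (Mw (e::Letter.qbar l::v')) : FA n K)
                  ∈ Zc (Iideal n K) := by
              intro l
              apply Zc_of_double hK
              have e1 : (Mw (e::Letter.qbar l::v') + stf (Mw (e::Letter.qbar l::v')) : FA n K)
                    + (Mw (e::Letter.qbar l::v') + stf (Mw (e::Letter.qbar l::v')))
                  = Mw [e] * ((Mw [Letter.qbar l] + Mw [Letter.qbar l])) * Mw v'
                    + stf (Mw v') * ((Mw [Letter.q l] + Mw [Letter.q l])) * (-(Mw [e])) := by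
                rw [Mw_cons e (Letter.qbar l::v'), Mw_cons (Letter.qbar l) v', stf_mul,
                  stf_mul, stf_qbar, stf_E he]
                noncomm_ring
              rw [hGbar l, hGq l] at e1
              have e2 : (Mw [e] * (br [Letter.q l] + (br [Letter.i, Letter.q l] * Mw [Letter.i]
                    + br [Letter.j, Letter.q l] * Mw [Letter.j]
                    + br [Letter.k, Letter.q l] * Mw [Letter.k]) - Gel l) * Mw v'
                    + stf (Mw v') * (br [Letter.q l]
                    - (br [Letter.i, Letter.q l] * Mw [Letter.i]
                    + br [Letter.j, Letter.q l] * Mw [Letter.j]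
                    + br [Letter.k, Letter.q l] * Mw [Letter.k]) + Gel l) * (-(Mw [e])) : FA n K)
                  = (Mw [e] * br [Letter.q l] * Mw v'
                      + (-(stf (Mw v'))) * br [Letter.q l] * Mw [e])
                    + (Mw [e] * br [Letter.i, Letter.q l] * (Mw [Letter.i] * Mw v')
                      + stf (Mw v') * br [Letter.i, Letter.q l] * (Mw [Letter.i] * Mw [e]))
                    + (Mw [e] * br [Letter.j, Letter.q l] * (Mw [Letter.j] * Mw v')
                      + stf (Mw v') * br [Letter.j, Letter.q l] * (Mw [Letter.j] * Mw [e]))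
                    + (Mw [e] * br [Letter.k, Letter.q l] * (Mw [Letter.k] * Mw v')
                      + stf (Mw v') * br [Letter.k, Letter.q l] * (Mw [Letter.k] * Mw [e]))
                    + (-(Mw [e] * Gel l * Mw v') - stf (Mw v') * Gel l * Mw [e]) := by
                noncomm_ring
              rw [e1, e2]
              have hBrev' : (Mw [e] * Mw v' + (-(stf (Mw v'))) * Mw [e] : FA n K)
                  ∈ Zc (Iideal n K) := by
                have h := hZev'
                rw [Mw_cons e v', stf_mul, stf_E he] at h
                have e0 : ((Mw [e] : FA n K) * Mw v' + stf (Mw v') * (-(Mw [e])))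
                    = Mw [e] * Mw v' + (-(stf (Mw v'))) * Mw [e] := by noncomm_ring
                rwa [e0] at h
              have hBrE : ∀ z : Letter n, z.isE = true →
                  ((Mw [e] : FA n K) * (Mw [z] * Mw v') + stf (Mw v') * (Mw [z] * Mw [e]))
                    ∈ Zc (Iideal n K) := by
                intro z hz
                have h := hEE e z he hz v' hv'
                have hw2 : stf (Mw (e::z::v') : FA n K) = stf (Mw v') * (Mw [z] * Mw [e]) := by
                  rw [Mw_cons e (z::v'), Mw_cons z v', stf_mul, stf_mul, stf_E he, stf_E hz]
                  noncomm_ring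
                have hw1 : (Mw (e::z::v') : FA n K) = Mw [e] * (Mw [z] * Mw v') := by
                  rw [Mw_cons e (z::v'), Mw_cons z v']
                rwa [hw2, hw1] at h
              refine Zc_add (Zc_add (Zc_add (Zc_add ?_ ?_) ?_) ?_) ?_
              · exact Z_mid (Z_brq l) hBrev'
              · exact Z_mid (Z_breq isE_i l) (hBrE _ isE_i)
              · exact Z_mid (Z_breq isE_j l) (hBrE _ isE_j)
              · exact Z_mid (Z_breq isE_k l) (hBrE _ isE_k)
              · apply Zc_mem
                refine (Iideal n K).sub_mem ((Iideal n K).neg_mem ?_) ?_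
                · exact (Iideal n K).mul_mem_right _ _
                    ((Iideal n K).mul_mem_left _ _ (Gel_mem l))
                · exact (Iideal n K).mul_mem_right _ _
                    ((Iideal n K).mul_mem_left _ _ (Gel_mem l))
            cases y with
            | i => exact hEE e _ he isE_i v' hv'
            | j => exact hEE e _ he isE_j v' hv'
            | k => exact hEE e _ he isE_k v' hv'
            | qbar l => exact hQB l
            | q l =>
                have key : (Mw (e::Letter.q l::v') + stf (Mw (e::Letter.q l::v')) : FA n K)
                    = (Mw [e] * br [Letter.q l] * Mw v'
                        + (-(stf (Mw v'))) * br [Letter.q l] * Mw [e])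
                      - (Mw (e::Letter.qbar l::v') + stf (Mw (e::Letter.qbar l::v'))) := by
                  rw [Mw_cons e (Letter.q l::v'), Mw_cons (Letter.q l) v',
                    Mw_cons e (Letter.qbar l::v'), Mw_cons (Letter.qbar l) v',
                    stf_mul, stf_mul, stf_mul, stf_mul, stf_q, stf_qbar, stf_E he, br_q]
                  noncomm_ring
                rw [key]
                have h1 : (Mw [e] * br [Letter.q l] * Mw v'
                    + (-(stf (Mw v'))) * br [Letter.q l] * Mw [e] : FA n K)
                      ∈ Zc (Iideal n K) := by
                  apply Z_mid (Z_brq l)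
                  have h := hZev'
                  rw [Mw_cons e v', stf_mul, stf_E he] at h
                  have e0 : (Mw [e] * Mw v' + stf (Mw v') * (-(Mw [e])) : FA n K)
                      = Mw [e] * Mw v' + (-(stf (Mw v'))) * Mw [e] := by noncomm_ring
                  rwa [e0] at h
                exact Zc_sub h1 (hQB l)
      -- main case split
      intro w hw
      cases w with
      | nil =>
          rw [Mw_nil, stf_one]
          exact Zc_add Zc_one Zc_one
      | cons x v =>
          have hv : v.length ≤ m := by simpa using hw
          have hBrv : (Mw v + stf (Mw v) : FA n K) ∈ Zc (Iideal n K) := IH v hv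
          have hQB : ∀ l : Fin n,
              (Mw (Letter.qbar l::v) + stf (Mw (Letter.qbar l::v)) : FA n K)
                ∈ Zc (Iideal n K) := by
            intro l
            apply Zc_of_double hK
            have e1 : (Mw (Letter.qbar l::v) + stf (Mw (Letter.qbar l::v)) : FA n K)
                  + (Mw (Letter.qbar l::v) + stf (Mw (Letter.qbar l::v)))
                = (Mw [Letter.qbar l] + Mw [Letter.qbar l]) * Mw v
                  + stf (Mw v) * (Mw [Letter.q l] + Mw [Letter.q l]) := by
              rw [Mw_cons (Letter.qbar l) v, stf_mul, stf_qbar]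
              noncomm_ring
            rw [hGbar l, hGq l] at e1
            have e2 : ((br [Letter.q l] + (br [Letter.i, Letter.q l] * Mw [Letter.i]
                  + br [Letter.j, Letter.q l] * Mw [Letter.j]
                  + br [Letter.k, Letter.q l] * Mw [Letter.k]) - Gel l) * Mw v
                  + stf (Mw v) * (br [Letter.q l]
                  - (br [Letter.i, Letter.q l] * Mw [Letter.i]
                  + br [Letter.j, Letter.q l] * Mw [Letter.j]
                  + br [Letter.k, Letter.q l] * Mw [Letter.k]) + Gel l) : FA n K)
                = ((1:FA n K) * br [Letter.q l] * Mw v + stf (Mw v) * br [Letter.q l] * 1)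
                  + ((1:FA n K) * br [Letter.i, Letter.q l] * (Mw [Letter.i] * Mw v)
                    + (-(stf (Mw v))) * br [Letter.i, Letter.q l] * Mw [Letter.i])
                  + ((1:FA n K) * br [Letter.j, Letter.q l] * (Mw [Letter.j] * Mw v)
                    + (-(stf (Mw v))) * br [Letter.j, Letter.q l] * Mw [Letter.j])
                  + ((1:FA n K) * br [Letter.k, Letter.q l] * (Mw [Letter.k] * Mw v)
                    + (-(stf (Mw v))) * br [Letter.k, Letter.q l] * Mw [Letter.k])
                  + (-(Gel l * Mw v) + stf (Mw v) * Gel l) := by noncomm_ring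
            rw [e1, e2]
            have hBrE : ∀ z : Letter n, z.isE = true →
                ((1:FA n K) * (Mw [z] * Mw v) + (-(stf (Mw v))) * Mw [z] : FA n K)
                  ∈ Zc (Iideal n K) := by
              intro z hz
              have h := hEcase z hz v hv
              rw [Mw_cons z v, stf_mul, stf_E hz] at h
              have e0 : ((Mw [z] : FA n K) * Mw v + stf (Mw v) * (-(Mw [z])))
                  = (1:FA n K) * (Mw [z] * Mw v) + (-(stf (Mw v))) * Mw [z] := by noncomm_ring
              rwa [e0] at h
            have hBrv' : ((1:FA n K) * Mw v + stf (Mw v) * 1 : FA n K) ∈ Zc (Iideal n K) := by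
              have h := hBrv
              have e0 : (Mw v + stf (Mw v) : FA n K)
                  = (1:FA n K) * Mw v + stf (Mw v) * 1 := by noncomm_ring
              rwa [e0] at h
            refine Zc_add (Zc_add (Zc_add (Zc_add ?_ ?_) ?_) ?_) ?_
            · exact Z_mid (Z_brq l) hBrv'
            · exact Z_mid (Z_breq isE_i l) (hBrE _ isE_i)
            · exact Z_mid (Z_breq isE_j l) (hBrE _ isE_j)
            · exact Z_mid (Z_breq isE_k l) (hBrE _ isE_k)
            · apply Zc_mem
              refine (Iideal n K).add_mem ((Iideal n K).neg_mem ?_) ?_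
              · exact (Iideal n K).mul_mem_right _ _ (Gel_mem l)
              · exact (Iideal n K).mul_mem_left _ _ (Gel_mem l)
          cases x with
          | i => exact hEcase _ isE_i v hv
          | j => exact hEcase _ isE_j v hv
          | k => exact hEcase _ isE_k v hv
          | qbar l => exact hQB l
          | q l =>
              have key : (Mw (Letter.q l::v) + stf (Mw (Letter.q l::v)) : FA n K)
                  = ((1:FA n K) * br [Letter.q l] * Mw v + stf (Mw v) * br [Letter.q l] * 1)
                    - (Mw (Letter.qbar l::v) + stf (Mw (Letter.qbar l::v))) := by
                rw [Mw_cons (Letter.q l) v, Mw_cons (Letter.qbar l) v, stf_mul, stf_mul, stf_q, stf_qbar, br_q]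
                noncomm_ring
              rw [key]
              refine Zc_sub (Z_mid (Z_brq l) ?_) (hQB l)
              have e0 : (Mw v + stf (Mw v) : FA n K)
                  = (1:FA n K) * Mw v + stf (Mw v) * 1 := by noncomm_ring
              rw [← e0]
              exact hBrv

/-- All brackets are central modulo `ℐ`. -/
lemma br_central (hK : (2:K) ≠ 0) (w : List (Letter n)) (g : FA n K) :
    (br w) * g - g * (br w) ∈ Iideal n K := by
  rw [br_eq]
  exact master hK w.length w le_rfl g

end AuxDev3

section AuxDev4

open Letter

variable {n : ℕ} {K : Type*} [Field K]

lemma comm_mem (hK : (2:K) ≠ 0) (w : List (Letter n)) (g : FA n K) :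
    g * br w - br w * g ∈ Iideal n K := by
  have h := (Iideal n K).neg_mem (br_central hK w g)
  simpa using h

lemma Mσ_id (w : List (Letter n)) : (Mσ id w : FA n K) = Mw w := by
  simp [Mσ]

lemma Brσ_id (w : List (Letter n)) : (Brσ id w : FA n K) = br w := by
  simp [Brσ]

lemma span_le' {R : Type*} [Ring R] {s : Set R} {I : TwoSidedIdeal R}
    (h : s ⊆ I) {x : R} (hx : x ∈ TwoSidedIdeal.span s) : x ∈ I :=
  TwoSidedIdeal.mem_span_iff.mp hx I h

lemma BG_subset_I (hK : (2:K) ≠ 0) : BG n K ⊆ (Iideal n K : Set (FA n K)) := by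
  intro p hp
  simp only [BG, BGset, BGmSet, Set.mem_union, Set.mem_setOf_eq] at hp
  rcases hp with
    (((((((((((((((h | h) | h) | h) | h) | h) | h) | h) | h) | h) | h) | h) | h) | h) | h) | h)
    | h
  -- c1 : BG2(a)
  · rcases h with h | h | h | h | h | h | h | h | h <;> rw [h] <;> simp only [Mσ_id]
    · exact Ig_ii
    · exact Ig_jj
    · exact Ig_kk
    · exact Ig_ij
    · exact Ig_ji
    · exact Ig_jk
    · exact Ig_kj
    · exact Ig_ki
    · exact Ig_ik
  -- c2
  · obtain ⟨a, rfl⟩ := h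
    have e : (Mσ id [Letter.qbar a, Letter.q a] - Mσ id [Letter.q a, Letter.qbar a] : FA n K)
        = Mw [Letter.qbar a] * br [Letter.q a] - br [Letter.q a] * Mw [Letter.qbar a] := by
      rw [br_q]
      simp only [Mσ_id, mul_add, add_mul, Mw_mul, List.cons_append, List.nil_append]
      abel
    rw [e]; exact comm_mem hK _ _
  -- c3
  · obtain ⟨a, b, _, h | h⟩ := h <;> rw [h] <;> simp only [Mσ_id, Brσ_id] <;>
      exact br_central hK _ _
  -- c4
  · obtain ⟨a, b, _, rfl⟩ := h
    simp only [Mσ_id, Brσ_id]; exact comm_mem hK _ _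
  -- c5
  · obtain ⟨a, e, _, rfl⟩ := h
    simp only [Mσ_id, Brσ_id]; exact comm_mem hK _ _
  -- c6
  · obtain ⟨a, rfl⟩ := h
    have e : (Mσ id [Letter.k, Letter.q a, Letter.k] + Mσ id [Letter.j, Letter.q a, Letter.j]
          + Mσ id [Letter.i, Letter.q a, Letter.i] + (2:K) • Mσ id [Letter.qbar a]
          + Mσ id [Letter.q a] : FA n K)
        = (2 : K) • Mw [Letter.qbar a] + Mw [Letter.q a]
          + Mw [Letter.i, Letter.q a, Letter.i]
          + Mw [Letter.j, Letter.q a, Letter.j]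
          + Mw [Letter.k, Letter.q a, Letter.k] := by
      simp only [Mσ_id]; abel
    rw [e]; exact Ig_rel2 a
  -- c7
  · obtain ⟨a, b, c, _, _, h | h | h⟩ := h <;> rw [h] <;> simp only [Mσ_id, Brσ_id] <;>
      exact br_central hK _ _
  -- c8
  · obtain ⟨a, b, _, h | h⟩ := h <;> rw [h] <;> simp only [Mσ_id, Brσ_id] <;>
      exact br_central hK _ _
  -- c9
  · obtain ⟨a, b, e, _, _, h | h | h⟩ := h <;> rw [h] <;> simp only [Mσ_id, Brσ_id] <;>
      exact br_central hK _ _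
  -- c10
  · obtain ⟨a, e, _, h | h⟩ := h <;> rw [h] <;> simp only [Mσ_id, Brσ_id] <;>
      exact br_central hK _ _
  -- c11
  · obtain ⟨a, h | h | h⟩ := h <;> rw [h] <;> simp only [Mσ_id, Brσ_id] <;>
      exact br_central hK _ _
  -- c12
  · obtain ⟨a, b, _, rfl⟩ := h
    simp only [Mσ_id, Brσ_id]; exact comm_mem hK _ _
  -- c13
  · obtain ⟨a, b, c, _, _, rfl⟩ := h
    simp only [Mσ_id, Brσ_id]; exact comm_mem hK _ _
  -- c14
  · obtain ⟨a, b, c, d, _, _, _, rfl⟩ := h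
    simp only [Mσ_id, Brσ_id]; exact comm_mem hK _ _
  -- c15
  · obtain ⟨a, b, c, e, _, _, _, rfl⟩ := h
    simp only [Mσ_id, Brσ_id]; exact comm_mem hK _ _
  -- c16
  · obtain ⟨a, b, e, e', _, _, _, _, _, rfl⟩ := h
    simp only [Mσ_id, Brσ_id]; exact comm_mem hK _ _
  -- c17 : BGm
  · obtain ⟨a, b, c, A, y, _, _, _, _, _, _, _, rfl⟩ := h
    simp only [Mσ_id, Brσ_id]; exact comm_mem hK _ _

end AuxDev4

section AuxDev5

open Letter

variable {n : ℕ} {K : Type*} [Field K]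

lemma bgJ_ii : (Mw [Letter.i, Letter.i] + 1 : FA n K) ∈ TwoSidedIdeal.span (BG n K) := by
  apply TwoSidedIdeal.subset_span
  have hh : (Mw [Letter.i, Letter.i] + 1 : FA n K) = Mσ id [Letter.i, Letter.i] + 1 := by simp only [Mσ_id]
  exact Set.mem_union_left _ (Set.mem_union_left _ (Set.mem_union_left _ (Set.mem_union_left _ (Set.mem_union_left _ (Set.mem_union_left _ (Set.mem_union_left _ (Set.mem_union_left _ (Set.mem_union_left _ (Set.mem_union_left _ (Set.mem_union_left _ (Set.mem_union_left _ (Set.mem_union_left _ (Set.mem_union_left _ (Set.mem_union_left _ (Set.mem_union_left _ (Or.inl hh))))))))))))))))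

lemma bgJ_jj : (Mw [Letter.j, Letter.j] + 1 : FA n K) ∈ TwoSidedIdeal.span (BG n K) := by
  apply TwoSidedIdeal.subset_span
  have hh : (Mw [Letter.j, Letter.j] + 1 : FA n K) = Mσ id [Letter.j, Letter.j] + 1 := by simp only [Mσ_id]
  exact Set.mem_union_left _ (Set.mem_union_left _ (Set.mem_union_left _ (Set.mem_union_left _ (Set.mem_union_left _ (Set.mem_union_left _ (Set.mem_union_left _ (Set.mem_union_left _ (Set.mem_union_left _ (Set.mem_union_left _ (Set.mem_union_left _ (Set.mem_union_left _ (Set.mem_union_left _ (Set.mem_union_left _ (Set.mem_union_left _ (Set.mem_union_left _ (Or.inr (Or.inl hh)))))))))))))))))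

lemma bgJ_kk : (Mw [Letter.k, Letter.k] + 1 : FA n K) ∈ TwoSidedIdeal.span (BG n K) := by
  apply TwoSidedIdeal.subset_span
  have hh : (Mw [Letter.k, Letter.k] + 1 : FA n K) = Mσ id [Letter.k, Letter.k] + 1 := by simp only [Mσ_id]
  exact Set.mem_union_left _ (Set.mem_union_left _ (Set.mem_union_left _ (Set.mem_union_left _ (Set.mem_union_left _ (Set.mem_union_left _ (Set.mem_union_left _ (Set.mem_union_left _ (Set.mem_union_left _ (Set.mem_union_left _ (Set.mem_union_left _ (Set.mem_union_left _ (Set.mem_union_left _ (Set.mem_union_left _ (Set.mem_union_left _ (Set.mem_union_left _ (Or.inr (Or.inr (Or.inl hh))))))))))))))))))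

lemma bgJ_ij : (Mw [Letter.i, Letter.j] - Mw [Letter.k] : FA n K) ∈ TwoSidedIdeal.span (BG n K) := by
  apply TwoSidedIdeal.subset_span
  have hh : (Mw [Letter.i, Letter.j] - Mw [Letter.k] : FA n K) = Mσ id [Letter.i, Letter.j] - Mσ id [Letter.k] := by simp only [Mσ_id]
  exact Set.mem_union_left _ (Set.mem_union_left _ (Set.mem_union_left _ (Set.mem_union_left _ (Set.mem_union_left _ (Set.mem_union_left _ (Set.mem_union_left _ (Set.mem_union_left _ (Set.mem_union_left _ (Set.mem_union_left _ (Set.mem_union_left _ (Set.mem_union_left _ (Set.mem_union_left _ (Set.mem_union_left _ (Set.mem_union_left _ (Set.mem_union_left _ (Or.inr (Or.inr (Or.inr (Or.inl hh)))))))))))))))))))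

lemma bgJ_ji : (Mw [Letter.j, Letter.i] + Mw [Letter.k] : FA n K) ∈ TwoSidedIdeal.span (BG n K) := by
  apply TwoSidedIdeal.subset_span
  have hh : (Mw [Letter.j, Letter.i] + Mw [Letter.k] : FA n K) = Mσ id [Letter.j, Letter.i] + Mσ id [Letter.k] := by simp only [Mσ_id]
  exact Set.mem_union_left _ (Set.mem_union_left _ (Set.mem_union_left _ (Set.mem_union_left _ (Set.mem_union_left _ (Set.mem_union_left _ (Set.mem_union_left _ (Set.mem_union_left _ (Set.mem_union_left _ (Set.mem_union_left _ (Set.mem_union_left _ (Set.mem_union_left _ (Set.mem_union_left _ (Set.mem_union_left _ (Set.mem_union_left _ (Set.mem_union_left _ (Or.inr (Or.inr (Or.inr (Or.inr (Or.inl hh))))))))))))))))))))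

lemma bgJ_jk : (Mw [Letter.j, Letter.k] - Mw [Letter.i] : FA n K) ∈ TwoSidedIdeal.span (BG n K) := by
  apply TwoSidedIdeal.subset_span
  have hh : (Mw [Letter.j, Letter.k] - Mw [Letter.i] : FA n K) = Mσ id [Letter.j, Letter.k] - Mσ id [Letter.i] := by simp only [Mσ_id]
  exact Set.mem_union_left _ (Set.mem_union_left _ (Set.mem_union_left _ (Set.mem_union_left _ (Set.mem_union_left _ (Set.mem_union_left _ (Set.mem_union_left _ (Set.mem_union_left _ (Set.mem_union_left _ (Set.mem_union_left _ (Set.mem_union_left _ (Set.mem_union_left _ (Set.mem_union_left _ (Set.mem_union_left _ (Set.mem_union_left _ (Set.mem_union_left _ (Or.inr (Or.inr (Or.inr (Or.inr (Or.inr (Or.inl hh)))))))))))))))))))))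

lemma bgJ_kj : (Mw [Letter.k, Letter.j] + Mw [Letter.i] : FA n K) ∈ TwoSidedIdeal.span (BG n K) := by
  apply TwoSidedIdeal.subset_span
  have hh : (Mw [Letter.k, Letter.j] + Mw [Letter.i] : FA n K) = Mσ id [Letter.k, Letter.j] + Mσ id [Letter.i] := by simp only [Mσ_id]
  exact Set.mem_union_left _ (Set.mem_union_left _ (Set.mem_union_left _ (Set.mem_union_left _ (Set.mem_union_left _ (Set.mem_union_left _ (Set.mem_union_left _ (Set.mem_union_left _ (Set.mem_union_left _ (Set.mem_union_left _ (Set.mem_union_left _ (Set.mem_union_left _ (Set.mem_union_left _ (Set.mem_union_left _ (Set.mem_union_left _ (Set.mem_union_left _ (Or.inr (Or.inr (Or.inr (Or.inr (Or.inr (Or.inr (Or.inl hh))))))))))))))))))))))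

lemma bgJ_ki : (Mw [Letter.k, Letter.i] - Mw [Letter.j] : FA n K) ∈ TwoSidedIdeal.span (BG n K) := by
  apply TwoSidedIdeal.subset_span
  have hh : (Mw [Letter.k, Letter.i] - Mw [Letter.j] : FA n K) = Mσ id [Letter.k, Letter.i] - Mσ id [Letter.j] := by simp only [Mσ_id]
  exact Set.mem_union_left _ (Set.mem_union_left _ (Set.mem_union_left _ (Set.mem_union_left _ (Set.mem_union_left _ (Set.mem_union_left _ (Set.mem_union_left _ (Set.mem_union_left _ (Set.mem_union_left _ (Set.mem_union_left _ (Set.mem_union_left _ (Set.mem_union_left _ (Set.mem_union_left _ (Set.mem_union_left _ (Set.mem_union_left _ (Set.mem_union_left _ (Or.inr (Or.inr (Or.inr (Or.inr (Or.inr (Or.inr (Or.inr (Or.inl hh)))))))))))))))))))))))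

lemma bgJ_ik : (Mw [Letter.i, Letter.k] + Mw [Letter.j] : FA n K) ∈ TwoSidedIdeal.span (BG n K) := by
  apply TwoSidedIdeal.subset_span
  have hh : (Mw [Letter.i, Letter.k] + Mw [Letter.j] : FA n K) = Mσ id [Letter.i, Letter.k] + Mσ id [Letter.j] := by simp only [Mσ_id]
  exact Set.mem_union_left _ (Set.mem_union_left _ (Set.mem_union_left _ (Set.mem_union_left _ (Set.mem_union_left _ (Set.mem_union_left _ (Set.mem_union_left _ (Set.mem_union_left _ (Set.mem_union_left _ (Set.mem_union_left _ (Set.mem_union_left _ (Set.mem_union_left _ (Set.mem_union_left _ (Set.mem_union_left _ (Set.mem_union_left _ (Set.mem_union_left _ (Or.inr (Or.inr (Or.inr (Or.inr (Or.inr (Or.inr (Or.inr (Or.inr hh)))))))))))))))))))))))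

lemma bgJ_c2 (a : Fin n) :
    (Mw [Letter.qbar a, Letter.q a] - Mw [Letter.q a, Letter.qbar a] : FA n K) ∈ TwoSidedIdeal.span (BG n K) := by
  apply TwoSidedIdeal.subset_span
  exact Set.mem_union_left _ (Set.mem_union_left _ (Set.mem_union_left _ (Set.mem_union_left _ (Set.mem_union_left _ (Set.mem_union_left _ (Set.mem_union_left _ (Set.mem_union_left _ (Set.mem_union_left _ (Set.mem_union_left _ (Set.mem_union_left _ (Set.mem_union_left _ (Set.mem_union_left _ (Set.mem_union_left _ (Set.mem_union_left _ (Set.mem_union_right _ (⟨a, by simp only [Mσ_id]⟩))))))))))))))))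

lemma bgJ_c3bar {a b : Fin n} (hab : a < b) :
    (br [Letter.q b] * Mw [Letter.qbar a] - Mw [Letter.qbar a] * br [Letter.q b] : FA n K) ∈ TwoSidedIdeal.span (BG n K) := by
  apply TwoSidedIdeal.subset_span
  exact Set.mem_union_left _ (Set.mem_union_left _ (Set.mem_union_left _ (Set.mem_union_left _ (Set.mem_union_left _ (Set.mem_union_left _ (Set.mem_union_left _ (Set.mem_union_left _ (Set.mem_union_left _ (Set.mem_union_left _ (Set.mem_union_left _ (Set.mem_union_left _ (Set.mem_union_left _ (Set.mem_union_left _ (Set.mem_union_right _ (⟨a, b, hab, Or.inl (by simp only [Mσ_id, Brσ_id])⟩)))))))))))))))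

lemma bgJ_c3 {a b : Fin n} (hab : a < b) :
    (br [Letter.q b] * Mw [Letter.q a] - Mw [Letter.q a] * br [Letter.q b] : FA n K) ∈ TwoSidedIdeal.span (BG n K) := by
  apply TwoSidedIdeal.subset_span
  exact Set.mem_union_left _ (Set.mem_union_left _ (Set.mem_union_left _ (Set.mem_union_left _ (Set.mem_union_left _ (Set.mem_union_left _ (Set.mem_union_left _ (Set.mem_union_left _ (Set.mem_union_left _ (Set.mem_union_left _ (Set.mem_union_left _ (Set.mem_union_left _ (Set.mem_union_left _ (Set.mem_union_left _ (Set.mem_union_right _ (⟨a, b, hab, Or.inr (by simp only [Mσ_id, Brσ_id])⟩)))))))))))))))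

lemma bgJ_c4 {a b : Fin n} (hab : a < b) :
    (Mw [Letter.q b] * br [Letter.q a] - br [Letter.q a] * Mw [Letter.q b] : FA n K) ∈ TwoSidedIdeal.span (BG n K) := by
  apply TwoSidedIdeal.subset_span
  exact Set.mem_union_left _ (Set.mem_union_left _ (Set.mem_union_left _ (Set.mem_union_left _ (Set.mem_union_left _ (Set.mem_union_left _ (Set.mem_union_left _ (Set.mem_union_left _ (Set.mem_union_left _ (Set.mem_union_left _ (Set.mem_union_left _ (Set.mem_union_left _ (Set.mem_union_left _ (Set.mem_union_right _ (⟨a, b, hab, by simp only [Mσ_id, Brσ_id]⟩))))))))))))))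

lemma bgJ_c5 (a : Fin n) (e : Letter n) (he : e.isE) :
    (Mw [e] * br [Letter.q a] - br [Letter.q a] * Mw [e] : FA n K) ∈ TwoSidedIdeal.span (BG n K) := by
  apply TwoSidedIdeal.subset_span
  exact Set.mem_union_left _ (Set.mem_union_left _ (Set.mem_union_left _ (Set.mem_union_left _ (Set.mem_union_left _ (Set.mem_union_left _ (Set.mem_union_left _ (Set.mem_union_left _ (Set.mem_union_left _ (Set.mem_union_left _ (Set.mem_union_left _ (Set.mem_union_left _ (Set.mem_union_right _ (⟨a, e, he, by simp only [Mσ_id, Brσ_id]⟩)))))))))))))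

lemma bgJ_c6 (a : Fin n) :
    ((2 : K) • Mw [Letter.qbar a] + Mw [Letter.q a]
      + Mw [Letter.i, Letter.q a, Letter.i]
      + Mw [Letter.j, Letter.q a, Letter.j]
      + Mw [Letter.k, Letter.q a, Letter.k] : FA n K) ∈ TwoSidedIdeal.span (BG n K) := by
  apply TwoSidedIdeal.subset_span
  exact Set.mem_union_left _ (Set.mem_union_left _ (Set.mem_union_left _ (Set.mem_union_left _ (Set.mem_union_left _ (Set.mem_union_left _ (Set.mem_union_left _ (Set.mem_union_left _ (Set.mem_union_left _ (Set.mem_union_left _ (Set.mem_union_left _ (Set.mem_union_right _ (⟨a, by simp only [Mσ_id]; abel⟩))))))))))))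

lemma bgJ_c9_1 {a b : Fin n} (hab : a < b) (e : Letter n) (he : e.isE) :
    (br [e, Letter.q b] * Mw [Letter.q a] - Mw [Letter.q a] * br [e, Letter.q b] : FA n K) ∈ TwoSidedIdeal.span (BG n K) := by
  apply TwoSidedIdeal.subset_span
  exact Set.mem_union_left _ (Set.mem_union_left _ (Set.mem_union_left _ (Set.mem_union_left _ (Set.mem_union_left _ (Set.mem_union_left _ (Set.mem_union_left _ (Set.mem_union_left _ (Set.mem_union_right _ (⟨a, b, e, hab, he, Or.inl (by simp only [Mσ_id, Brσ_id])⟩)))))))))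

lemma bgJ_c9_2 {a b : Fin n} (hab : a < b) (e : Letter n) (he : e.isE) :
    (br [e, Letter.q a] * Mw [Letter.q b] - Mw [Letter.q b] * br [e, Letter.q a] : FA n K) ∈ TwoSidedIdeal.span (BG n K) := by
  apply TwoSidedIdeal.subset_span
  exact Set.mem_union_left _ (Set.mem_union_left _ (Set.mem_union_left _ (Set.mem_union_left _ (Set.mem_union_left _ (Set.mem_union_left _ (Set.mem_union_left _ (Set.mem_union_left _ (Set.mem_union_right _ (⟨a, b, e, hab, he, Or.inr (Or.inl (by simp only [Mσ_id, Brσ_id]))⟩)))))))))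

lemma bgJ_c9_3 {a b : Fin n} (hab : a < b) (e : Letter n) (he : e.isE) :
    (br [e, Letter.q a] * Mw [Letter.qbar b] - Mw [Letter.qbar b] * br [e, Letter.q a] : FA n K) ∈ TwoSidedIdeal.span (BG n K) := by
  apply TwoSidedIdeal.subset_span
  exact Set.mem_union_left _ (Set.mem_union_left _ (Set.mem_union_left _ (Set.mem_union_left _ (Set.mem_union_left _ (Set.mem_union_left _ (Set.mem_union_left _ (Set.mem_union_left _ (Set.mem_union_right _ (⟨a, b, e, hab, he, Or.inr (Or.inr (by simp only [Mσ_id, Brσ_id]))⟩)))))))))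

lemma bgJ_c10_1 (a : Fin n) (e : Letter n) (he : e.isE) :
    (br [e, Letter.q a] * Mw [Letter.q a] - Mw [Letter.q a] * br [e, Letter.q a] : FA n K) ∈ TwoSidedIdeal.span (BG n K) := by
  apply TwoSidedIdeal.subset_span
  exact Set.mem_union_left _ (Set.mem_union_left _ (Set.mem_union_left _ (Set.mem_union_left _ (Set.mem_union_left _ (Set.mem_union_left _ (Set.mem_union_left _ (Set.mem_union_right _ (⟨a, e, he, Or.inl (by simp only [Mσ_id, Brσ_id])⟩))))))))

lemma bgJ_c10_2 (a : Fin n) (e : Letter n) (he : e.isE) :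
    (br [e, Letter.q a] * Mw [Letter.qbar a] - Mw [Letter.qbar a] * br [e, Letter.q a] : FA n K) ∈ TwoSidedIdeal.span (BG n K) := by
  apply TwoSidedIdeal.subset_span
  exact Set.mem_union_left _ (Set.mem_union_left _ (Set.mem_union_left _ (Set.mem_union_left _ (Set.mem_union_left _ (Set.mem_union_left _ (Set.mem_union_left _ (Set.mem_union_right _ (⟨a, e, he, Or.inr (by simp only [Mσ_id, Brσ_id])⟩))))))))

lemma bgJ_c11_ji (a : Fin n) :
    (br [Letter.j, Letter.q a] * Mw [Letter.i] - Mw [Letter.i] * br [Letter.j, Letter.q a] : FA n K) ∈ TwoSidedIdeal.span (BG n K) := by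
  apply TwoSidedIdeal.subset_span
  exact Set.mem_union_left _ (Set.mem_union_left _ (Set.mem_union_left _ (Set.mem_union_left _ (Set.mem_union_left _ (Set.mem_union_left _ (Set.mem_union_right _ (⟨a, Or.inl (by simp only [Mσ_id, Brσ_id])⟩)))))))

lemma bgJ_c11_ki (a : Fin n) :
    (br [Letter.k, Letter.q a] * Mw [Letter.i] - Mw [Letter.i] * br [Letter.k, Letter.q a] : FA n K) ∈ TwoSidedIdeal.span (BG n K) := by
  apply TwoSidedIdeal.subset_span
  exact Set.mem_union_left _ (Set.mem_union_left _ (Set.mem_union_left _ (Set.mem_union_left _ (Set.mem_union_left _ (Set.mem_union_left _ (Set.mem_union_right _ (⟨a, Or.inr (Or.inl (by simp only [Mσ_id, Brσ_id]))⟩)))))))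

lemma bgJ_c11_kj (a : Fin n) :
    (br [Letter.k, Letter.q a] * Mw [Letter.j] - Mw [Letter.j] * br [Letter.k, Letter.q a] : FA n K) ∈ TwoSidedIdeal.span (BG n K) := by
  apply TwoSidedIdeal.subset_span
  exact Set.mem_union_left _ (Set.mem_union_left _ (Set.mem_union_left _ (Set.mem_union_left _ (Set.mem_union_left _ (Set.mem_union_left _ (Set.mem_union_right _ (⟨a, Or.inr (Or.inr (by simp only [Mσ_id, Brσ_id]))⟩)))))))

end AuxDev5

section AuxDev6

open Letter

variable {n : ℕ} {K : Type*} [Field K]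

/-- Commutators of single letters with `[q l]` lie in the span of `BG`. -/
lemma L1 (l : Fin n) (a : Letter n) :
    (Mw [a] * br [Letter.q l] - br [Letter.q l] * Mw [a] : FA n K)
      ∈ TwoSidedIdeal.span (BG n K) := by
  cases a with
  | i => exact bgJ_c5 l _ isE_i
  | j => exact bgJ_c5 l _ isE_j
  | k => exact bgJ_c5 l _ isE_k
  | q m =>
      rcases lt_trichotomy m l with hml | rfl | hml
      · have h := (TwoSidedIdeal.span (BG n K)).neg_mem (bgJ_c3 hml)
        simpa using h
      · have h := (TwoSidedIdeal.span (BG n K)).neg_mem (bgJ_c2 (K := K) m)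
        have e : -(Mw [Letter.qbar m, Letter.q m] - Mw [Letter.q m, Letter.qbar m] : FA n K)
            = Mw [Letter.q m] * br [Letter.q m] - br [Letter.q m] * Mw [Letter.q m] := by
          rw [br_q]
          simp only [mul_add, add_mul, Mw_mul, List.cons_append, List.nil_append]
          abel
        rwa [e] at h
      · exact bgJ_c4 hml
  | qbar m =>
      rcases lt_trichotomy m l with hml | rfl | hml
      · have h := (TwoSidedIdeal.span (BG n K)).neg_mem (bgJ_c3bar hml)
        simpa using h
      · have h := bgJ_c2 (K := K) m
        have e : (Mw [Letter.qbar m, Letter.q m] - Mw [Letter.q m, Letter.qbar m] : FA n K)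
            = Mw [Letter.qbar m] * br [Letter.q m] - br [Letter.q m] * Mw [Letter.qbar m] := by
          rw [br_q]
          simp only [mul_add, add_mul, Mw_mul, List.cons_append, List.nil_append]
          abel
        rwa [e] at h
      · -- m > l
        have h1 := bgJ_c3 (K := K) (a := l) (b := m) hml
        have h2 := bgJ_c3bar (K := K) (a := l) (b := m) hml
        have h3 := bgJ_c4 (K := K) (a := l) (b := m) hml
        have e : (Mw [Letter.qbar m] * br [Letter.q l]
              - br [Letter.q l] * Mw [Letter.qbar m] : FA n K)
            = ((br [Letter.q m] * Mw [Letter.q l] - Mw [Letter.q l] * br [Letter.q m])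
              + (br [Letter.q m] * Mw [Letter.qbar l] - Mw [Letter.qbar l] * br [Letter.q m]))
              - (Mw [Letter.q m] * br [Letter.q l] - br [Letter.q l] * Mw [Letter.q m]) := by
          rw [br_q, br_q]; noncomm_ring
        rw [e]
        exact (TwoSidedIdeal.span (BG n K)).sub_mem
          ((TwoSidedIdeal.span (BG n K)).add_mem h1 h2) h3

lemma brEq_expand {e : Letter n} (he : e.isE = true) (l : Fin n) :
    (br [e, Letter.q l] : FA n K)
      = Mw [e] * Mw [Letter.q l] - Mw [Letter.qbar l] * Mw [e] := by
  rw [br_Eq he l, Mw_mul, Mw_mul]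
  rfl

/-- The case `e' = e` of the basis-letter commutators with `[e q l]`. -/
lemma L2E_eq (l : Fin n) {e : Letter n} (he : e.isE = true)
    (hgee : (Mw [e, e] + 1 : FA n K) ∈ TwoSidedIdeal.span (BG n K)) :
    (Mw [e] * br [e, Letter.q l] - br [e, Letter.q l] * Mw [e] : FA n K)
      ∈ TwoSidedIdeal.span (BG n K) := by
  set J := TwoSidedIdeal.span (BG n K) with hJ
  have hTe : (br [Letter.q l] * Mw [e] - Mw [e] * br [Letter.q l] : FA n K) ∈ J := by
    have h := J.neg_mem (L1 l e); simpa using h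
  have hee : (Mw [e, e] : FA n K) = Mw [e] * Mw [e] := (Mw_mul [e] [e]).symm
  have key : (Mw [e] * br [e, Letter.q l] - br [e, Letter.q l] * Mw [e] : FA n K)
      = (Mw [e, e] + 1) * Mw [Letter.q l] + Mw [Letter.qbar l] * (Mw [e, e] + 1)
        - (Mw [e, e] + 1) * br [Letter.q l]
        - Mw [e] * (br [Letter.q l] * Mw [e] - Mw [e] * br [Letter.q l]) := by
    rw [brEq_expand he l, br_q, hee]; noncomm_ring
  rw [key]
  refine J.sub_mem (J.sub_mem (J.add_mem ?_ ?_) ?_) ?_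
  · exact J.mul_mem_right _ _ hgee
  · exact J.mul_mem_left _ _ hgee
  · exact J.mul_mem_right _ _ hgee
  · exact J.mul_mem_left _ _ hTe

/-- Flip lemma: commutation of `e'` with `[e q l]` from that of `e` with `[e' q l]`. -/
lemma L2E_main (l : Fin n) {e e' : Letter n} (he : e.isE = true) (he' : e'.isE = true)
    (hP : (Mw [e] * Mw [e'] + Mw [e'] * Mw [e] : FA n K) ∈ TwoSidedIdeal.span (BG n K))
    (hlt : (Mw [e] * br [e', Letter.q l] - br [e', Letter.q l] * Mw [e] : FA n K)
      ∈ TwoSidedIdeal.span (BG n K)) :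
    (Mw [e'] * br [e, Letter.q l] - br [e, Letter.q l] * Mw [e'] : FA n K)
      ∈ TwoSidedIdeal.span (BG n K) := by
  set J := TwoSidedIdeal.span (BG n K) with hJ
  have hTe : (br [Letter.q l] * Mw [e] - Mw [e] * br [Letter.q l] : FA n K) ∈ J := by
    have h := J.neg_mem (L1 l e); simpa using h
  have hTe' : (br [Letter.q l] * Mw [e'] - Mw [e'] * br [Letter.q l] : FA n K) ∈ J := by
    have h := J.neg_mem (L1 l e'); simpa using h
  have key : (Mw [e'] * br [e, Letter.q l] - br [e, Letter.q l] * Mw [e'] : FA n K)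
      = -(Mw [e] * br [e', Letter.q l] - br [e', Letter.q l] * Mw [e])
        + ((Mw [e] * Mw [e'] + Mw [e'] * Mw [e]) * Mw [Letter.q l]
          + Mw [Letter.qbar l] * (Mw [e] * Mw [e'] + Mw [e'] * Mw [e])
          - (Mw [e] * Mw [e'] + Mw [e'] * Mw [e]) * br [Letter.q l]
          - Mw [e'] * (br [Letter.q l] * Mw [e] - Mw [e] * br [Letter.q l])
          - Mw [e] * (br [Letter.q l] * Mw [e'] - Mw [e'] * br [Letter.q l])) := by
    rw [brEq_expand he l, brEq_expand he' l, br_q]; noncomm_ring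
  rw [key]
  refine J.add_mem (J.neg_mem hlt) ?_
  refine J.sub_mem (J.sub_mem (J.sub_mem (J.add_mem ?_ ?_) ?_) ?_) ?_
  · exact J.mul_mem_right _ _ hP
  · exact J.mul_mem_left _ _ hP
  · exact J.mul_mem_right _ _ hP
  · exact J.mul_mem_left _ _ hTe
  · exact J.mul_mem_left _ _ hTe'

set_option maxHeartbeats 1600000 in
/-- Commutators of single letters with `[e q l]` lie in the span of `BG`. -/
lemma L2 (l : Fin n) {e : Letter n} (he : e.isE = true) (a : Letter n) :
    (Mw [a] * br [e, Letter.q l] - br [e, Letter.q l] * Mw [a] : FA n K)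
      ∈ TwoSidedIdeal.span (BG n K) := by
  set J := TwoSidedIdeal.span (BG n K) with hJ
  cases a with
  | q m =>
      rcases lt_trichotomy m l with hml | rfl | hml
      · have h := J.neg_mem (bgJ_c9_1 hml e he); simpa using h
      · have h := J.neg_mem (bgJ_c10_1 m e he); simpa using h
      · have h := J.neg_mem (bgJ_c9_2 hml e he); simpa using h
  | qbar m =>
      rcases lt_trichotomy m l with hml | rfl | hml
      · -- m < l : combination
        have hqm : (Mw [Letter.q m] * br [e, Letter.q l]
            - br [e, Letter.q l] * Mw [Letter.q m] : FA n K) ∈ J := by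
          have h := J.neg_mem (bgJ_c9_1 hml e he); simpa using h
        have hBe : (br [Letter.q m] * Mw [e] - Mw [e] * br [Letter.q m] : FA n K) ∈ J := by
          have h := J.neg_mem (L1 m e); simpa using h
        have hBql : (br [Letter.q m] * Mw [Letter.q l]
            - Mw [Letter.q l] * br [Letter.q m] : FA n K) ∈ J := by
          have h := J.neg_mem (L1 m (Letter.q l)); simpa using h
        have hBqbl : (br [Letter.q m] * Mw [Letter.qbar l]
            - Mw [Letter.qbar l] * br [Letter.q m] : FA n K) ∈ J := by
          have h := J.neg_mem (L1 m (Letter.qbar l)); simpa using h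
        have key : (Mw [Letter.qbar m] * br [e, Letter.q l]
              - br [e, Letter.q l] * Mw [Letter.qbar m] : FA n K)
            = ((br [Letter.q m] * Mw [e] - Mw [e] * br [Letter.q m]) * Mw [Letter.q l]
                + Mw [e] * (br [Letter.q m] * Mw [Letter.q l]
                    - Mw [Letter.q l] * br [Letter.q m])
                - (br [Letter.q m] * Mw [Letter.qbar l]
                    - Mw [Letter.qbar l] * br [Letter.q m]) * Mw [e]
                - Mw [Letter.qbar l] * (br [Letter.q m] * Mw [e] - Mw [e] * br [Letter.q m]))
              - (Mw [Letter.q m] * br [e, Letter.q l]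
                  - br [e, Letter.q l] * Mw [Letter.q m]) := by
          rw [brEq_expand he l, br_q m]; noncomm_ring
        rw [key]
        refine J.sub_mem (J.sub_mem (J.sub_mem (J.add_mem ?_ ?_) ?_) ?_) hqm
        · exact J.mul_mem_right _ _ hBe
        · exact J.mul_mem_left _ _ hBql
        · exact J.mul_mem_right _ _ hBqbl
        · exact J.mul_mem_left _ _ hBe
      · have h := J.neg_mem (bgJ_c10_2 m e he); simpa using h
      · have h := J.neg_mem (bgJ_c9_3 hml e he); simpa using h
  | i =>
      cases e with
      | i => exact L2E_eq l rfl bgJ_ii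
      | j => have h := J.neg_mem (bgJ_c11_ji l); simpa using h
      | k => have h := J.neg_mem (bgJ_c11_ki l); simpa using h
      | q m => simp [Letter.isE] at he
      | qbar m => simp [Letter.isE] at he
  | j =>
      cases e with
      | j => exact L2E_eq l rfl bgJ_jj
      | i =>
          refine L2E_main l (e := Letter.i) (e' := Letter.j) rfl rfl ?_ ?_
          · have h := J.add_mem bgJ_ij bgJ_ji
            have e0 : ((Mw [Letter.i, Letter.j] - Mw [Letter.k])
                + (Mw [Letter.j, Letter.i] + Mw [Letter.k]) : FA n K)
                = Mw [Letter.i] * Mw [Letter.j] + Mw [Letter.j] * Mw [Letter.i] := by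
              rw [Mw_mul, Mw_mul]
              simp only [List.cons_append, List.nil_append]
              abel
            rwa [e0] at h
          · have h := J.neg_mem (bgJ_c11_ji l); show _ ∈ J; simpa using h
      | k => have h := J.neg_mem (bgJ_c11_kj l); simpa using h
      | q m => simp [Letter.isE] at he
      | qbar m => simp [Letter.isE] at he
  | k =>
      cases e with
      | k => exact L2E_eq l rfl bgJ_kk
      | i =>
          refine L2E_main l (e := Letter.i) (e' := Letter.k) rfl rfl ?_ ?_
          · have h := J.add_mem bgJ_ik bgJ_ki
            have e0 : ((Mw [Letter.i, Letter.k] + Mw [Letter.j])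
                + (Mw [Letter.k, Letter.i] - Mw [Letter.j]) : FA n K)
                = Mw [Letter.i] * Mw [Letter.k] + Mw [Letter.k] * Mw [Letter.i] := by
              rw [Mw_mul, Mw_mul]
              simp only [List.cons_append, List.nil_append]
              abel
            rwa [e0] at h
          · have h := J.neg_mem (bgJ_c11_ki l); show _ ∈ J; simpa using h
      | j =>
          refine L2E_main l (e := Letter.j) (e' := Letter.k) rfl rfl ?_ ?_
          · have h := J.add_mem bgJ_jk bgJ_kj
            have e0 : ((Mw [Letter.j, Letter.k] - Mw [Letter.i])
                + (Mw [Letter.k, Letter.j] + Mw [Letter.i]) : FA n K)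
                = Mw [Letter.j] * Mw [Letter.k] + Mw [Letter.k] * Mw [Letter.j] := by
              rw [Mw_mul, Mw_mul]
              simp only [List.cons_append, List.nil_append]
              abel
            rwa [e0] at h
          · have h := J.neg_mem (bgJ_c11_kj l); show _ ∈ J; simpa using h
      | q m => simp [Letter.isE] at he
      | qbar m => simp [Letter.isE] at he

lemma Igens_subset_spanBG :
    Igens n K ⊆ (TwoSidedIdeal.span (BG n K) : Set (FA n K)) := by
  intro p hp
  simp only [Igens, Set.mem_union, Set.mem_setOf_eq] at hp
  rcases hp with (h | h) | h
  · rcases h with h | h | h | h | h | h | h | h | h <;> rw [h]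
    · exact bgJ_ii
    · exact bgJ_jj
    · exact bgJ_kk
    · exact bgJ_ij
    · exact bgJ_ji
    · exact bgJ_ik
    · exact bgJ_ki
    · exact bgJ_kj
    · exact bgJ_jk
  · obtain ⟨l, rfl⟩ := h
    exact bgJ_c6 l
  · obtain ⟨a, l, h | h | h | h⟩ := h <;> rw [h]
    · exact L1 l a
    · exact L2 l (e := Letter.i) rfl a
    · exact L2 l (e := Letter.j) rfl a
    · exact L2 l (e := Letter.k) rfl a

end AuxDev6
/-- The two-sided ideal of `K⟨𝒜⟩` generated by `BG` equals `ℐ`. -/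
theorem span_BG_eq_Iideal
    (n : ℕ) (hn : 1 ≤ n) (K : Type*) [Field K] (hK : (2 : K) ≠ 0) :
    TwoSidedIdeal.span (BG n K) = Iideal n K := by
  refine le_antisymm (SetLike.le_def.mpr ?_) (SetLike.le_def.mpr ?_)
  · intro x hx
    exact span_le' (BG_subset_I hK) hx
  · intro x hx
    have hx' : x ∈ TwoSidedIdeal.span (Igens n K) := hx
    exact span_le' Igens_subset_spanBG hx'
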